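/- arXiv:2009.08479 — 2 statements merged into one kernel-verified Lean document; each statement's English description precedes it below -/
import Mathlib

section
/- There are constants c, C > 0 such that the following holds. Let H be a finite simple graph with n ≥ 2 vertices in which every vertex has degree at least h, where h ≥ 1 is an integer, and set φ = c/log₂ n. Then there is a collection F = {K₁, …, K_t} of vertex-disjoint induced subgraphs of H (called cores) with t ≤ C·n·(log₂ n)/h, such that: (i) every K ∈ F is a φ-expander, every vertex u ∈ V(K) satisfies deg_K(u) ≥ φ·h/3, and any two vertices of K are at distance at most C·(log₂ n)/φ in K; and (ii) for every vertex u of H not belonging to any core in F, there exists a family of at least 2h/3 pairwise edge-disjoint paths in H, each of length at most C·log₂ n and each joining u to some vertex lying in ⋃_{K∈F} V(K). -/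
/-!
Write `L = log₂ n` and take `c = 1/1000`, `C = 1000`.

If `h ≤ 1000 L`, the cores are the edges of a maximal matching: an edge is an expander of
diameter one, and an unmatched vertex has all of its at least `h` neighbours matched.

If `h > 1000 L`, the cores form a maximal disjoint family of `c/L`-expanders of internal minimum
degree at least `h/12`; by ball growth their diameter is `O(L²)`. Suppose an uncovered vertex `u`
has fewer than `2h/3` edge-disjoint paths of length `ℓ ≈ 5L` to the cores, and delete the edges
of a maximal family of such paths. In the remaining graph the `H`-volume of the balls around `u`
is at most `n²`, so it cannot grow by a factor `4/3` at each of `ℓ - 2` steps; where it does not,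
the ball `U` has `2 vol_H(U) < 3 vol(H[U])`, because few edges were deleted. Peeling vertices that
keep less than a third of their degree leaves a nonempty `T` with `deg_T ≥ deg_H / 3`. Inside `T`,
a set of least weight `σ` among those whose internal volume is at least
`σ (3/4 + log₂ σ / (4 log₂ vol T))` is a `1/(8 log₂ vol T)`-expander keeping a quarter of every
degree: removing a vertex or a side of a sparse cut would give a lighter such set. It is a new
core disjoint from the old ones, contradicting maximality, so the paths exist.
-/

open Finset
open scoped Classical

noncomputable section

universe u

variable {V : Type*} [Fintype V]

/-- The degree of the vertex `v` in the graph `G`. -/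
def gdeg (G : SimpleGraph V) (v : V) : ℕ :=
  (Finset.univ.filter fun u => G.Adj v u).card

/-- The degree of the vertex `v` in the induced subgraph `G[W]`:
the number of `G`-neighbors of `v` inside `W`. -/
def gdegIn (G : SimpleGraph V) (W : Finset V) (v : V) : ℕ :=
  (W.filter fun u => G.Adj v u).card

/-- The volume of `S` in the induced subgraph `G[W]`. -/
def gvolIn (G : SimpleGraph V) (W S : Finset V) : ℕ := ∑ v ∈ S, gdegIn G W v

/-- The number of edges of the induced subgraph `G[W]` with exactly one endpoint
in `S` (the other endpoint lying in `W \ S`). -/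
def gcutIn (G : SimpleGraph V) (W S : Finset V) : ℕ :=
  (Finset.univ.filter fun p : V × V =>
    p.1 ∈ S ∧ p.2 ∈ W ∧ p.2 ∉ S ∧ G.Adj p.1 p.2).card

/-- The induced subgraph `G[W]` is a `φ`-expander. -/
def IsInducedExpander (G : SimpleGraph V) (W : Finset V) (φ : ℝ) : Prop :=
  ∀ S ⊆ W, S.Nonempty → (W \ S).Nonempty →
    φ * min (gvolIn G W S : ℝ) (gvolIn G W (W \ S) : ℝ) ≤ (gcutIn G W S : ℝ)

section RealFacts

lemma logb_two_natCast_nonneg (n : ℕ) : 0 ≤ Real.logb 2 n :=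
  div_nonneg (Real.log_natCast_nonneg n) (Real.log_nonneg one_le_two)

lemma one_le_logb_two {x : ℝ} (hx : 2 ≤ x) : 1 ≤ Real.logb 2 x := by
  rwa [Real.le_logb_iff_rpow_le one_lt_two (by linarith), Real.rpow_one]

lemma natCast_mul_logb_le_of_le {a b : ℕ} (hab : a ≤ b) :
    (a : ℝ) * Real.logb 2 a ≤ b * Real.logb 2 b := by
  rcases Nat.eq_zero_or_pos a with rfl | ha
  · simpa using mul_nonneg (Nat.cast_nonneg b) (logb_two_natCast_nonneg b)
  have ha' : (1 : ℝ) ≤ a := by exact_mod_cast ha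
  have hab' : (a : ℝ) ≤ b := by exact_mod_cast hab
  exact mul_le_mul hab' (Real.logb_le_logb_of_le one_lt_two (by positivity) hab')
    (Real.logb_nonneg one_lt_two ha') (by positivity)

lemma add_mul_logb_le {a b : ℝ} (ha : 0 < a) (hab : a ≤ b) :
    a + a * Real.logb 2 a + b * Real.logb 2 b ≤ (a + b) * Real.logb 2 (a + b) := by
  have h2a : 1 + Real.logb 2 a ≤ Real.logb 2 (a + b) := by
    rw [← Real.logb_self_eq_one one_lt_two, ← Real.logb_mul two_ne_zero ha.ne']
    exact Real.logb_le_logb_of_le one_lt_two (by positivity) (by linarith)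
  have hb : Real.logb 2 b ≤ Real.logb 2 (a + b) :=
    Real.logb_le_logb_of_le one_lt_two (by linarith) (by linarith)
  nlinarith

lemma exists_lt_one_add_pow {φ X : ℝ} (hφ : 0 < φ) (hX : 1 ≤ X) :
    ∃ M : ℕ, (M : ℝ) ≤ (2 / φ + 1) * (Real.logb 2 X + 2) ∧ X < (1 + φ) ^ M := by
  set a := ⌈2 / φ⌉₊
  set b := ⌈Real.logb 2 X⌉₊ + 1
  have hlog : 0 ≤ Real.logb 2 X := Real.logb_nonneg one_lt_two hX
  have ha : 2 / φ ≤ a := Nat.le_ceil _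
  have hb : Real.logb 2 X < b := by
    push_cast [b]
    linarith [Nat.le_ceil (Real.logb 2 X)]
  refine ⟨a * b, ?_, ?_⟩
  · push_cast
    exact mul_le_mul (Nat.ceil_lt_add_one (by positivity)).le
      (by push_cast [b]; linarith [Nat.ceil_lt_add_one hlog]) (by positivity) (by positivity)
  · have h2 : (2 : ℝ) ≤ (1 + φ) ^ a := by
      have := one_add_mul_le_pow (by linarith : (-2 : ℝ) ≤ φ) a
      have : 2 ≤ (a : ℝ) * φ := by rwa [div_le_iff₀ hφ] at ha
      linarith
    calc X < 2 ^ (b : ℝ) := (Real.logb_lt_iff_lt_rpow one_lt_two (by linarith)).mp hb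
      _ = 2 ^ b := Real.rpow_natCast 2 b
      _ ≤ ((1 + φ) ^ a) ^ b := pow_le_pow_left₀ zero_le_two h2 b
      _ = (1 + φ) ^ (a * b) := (pow_mul _ a b).symm

lemma exists_sq_lt_pow {x : ℝ} (hx : 1 ≤ x) :
    ∃ ℓ : ℕ, x ^ 2 < (4 / 3) ^ (ℓ - 2) ∧ (ℓ : ℝ) ≤ 5 * Real.logb 2 x + 12 := by
  set k := ⌈Real.logb 2 x⌉₊
  have hlog : 0 ≤ Real.logb 2 x := Real.logb_nonneg one_lt_two hx
  refine ⟨5 * k + 7, ?_, ?_⟩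
  · have hxk : x ≤ 2 ^ k := by
      calc x = 2 ^ Real.logb 2 x := (Real.rpow_logb two_pos one_lt_two.ne' (by linarith)).symm
        _ ≤ 2 ^ (k : ℝ) := Real.rpow_le_rpow_of_exponent_le one_le_two (Nat.le_ceil _)
        _ = 2 ^ k := Real.rpow_natCast 2 k
    calc x ^ 2 ≤ (2 ^ k) ^ 2 := pow_le_pow_left₀ (by linarith) hxk 2
      _ = 4 ^ k := by rw [← pow_mul, mul_comm, pow_mul]; norm_num
      _ < 4 ^ (k + 1) := pow_lt_pow_right₀ (by norm_num) k.lt_succ_self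
      _ ≤ ((4 / 3) ^ 5) ^ (k + 1) := pow_le_pow_left₀ (by norm_num) (by norm_num) _
      _ = (4 / 3) ^ (5 * k + 7 - 2) := by rw [← pow_mul]; congr 1
  · push_cast
    linarith [Nat.ceil_lt_add_one hlog]

lemma exists_le_mul_of_lt_mul_pow {f : ℕ → ℝ} {q N : ℝ} {m : ℕ} (hq : 0 ≤ q)
    (hN : ∀ j ≤ m, f j ≤ N) (hlt : N < f 0 * q ^ m) : ∃ j < m, f (j + 1) ≤ q * f j := by
  by_contra! h
  have hgrow (j : ℕ) (hj : j ≤ m) : f 0 * q ^ j ≤ f j := by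
    induction j with
    | zero => simp
    | succ j ih =>
      calc f 0 * q ^ (j + 1) = q * (f 0 * q ^ j) := by ring
        _ ≤ q * f j := mul_le_mul_of_nonneg_left (ih (by omega)) hq
        _ ≤ f (j + 1) := (h j (by omega)).le
  linarith [hgrow m le_rfl, hN m le_rfl]

end RealFacts

section InducedCounts

variable {α : Type*} (G : SimpleGraph α)

lemma gdegIn_mono {W W' : Finset α} (h : W ⊆ W') (v : α) : gdegIn G W v ≤ gdegIn G W' v :=
  card_le_card (filter_subset_filter _ h)

lemma gdegIn_lt_card {W : Finset α} {v : α} (hv : v ∈ W) : gdegIn G W v < #W :=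
  card_lt_card (ssubset_of_subset_of_ne (filter_subset _ _)
    fun h => G.irrefl (mem_filter.mp (h ▸ hv)).2)

lemma gdegIn_eq_add_of_subset {A W : Finset α} (h : A ⊆ W) (v : α) :
    gdegIn G W v = gdegIn G A v + gdegIn G (W \ A) v := by
  rw [gdegIn, gdegIn, gdegIn, ← card_union_of_disjoint (disjoint_filter_filter disjoint_sdiff),
    ← filter_union, union_sdiff_of_subset h]

lemma gdegIn_singleton_self (v : α) : gdegIn G {v} v = 0 := by
  simp [gdegIn, filter_singleton]

variable {G} in
lemma gvolIn_mono_left {W W' : Finset α} (h : W ⊆ W') (S : Finset α) :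
    gvolIn G W S ≤ gvolIn G W' S :=
  sum_le_sum fun v _ => gdegIn_mono G h v

variable {G} in
lemma card_le_gvolIn {U T : Finset α} (hU : ∀ v ∈ U, 1 ≤ gdegIn G U v) (hTU : T ⊆ U) :
    #T ≤ gvolIn G U T := by
  simpa [gvolIn] using card_nsmul_le_sum T (gdegIn G U) 1 fun v hv => hU v (hTU hv)

variable {G} in
lemma two_le_gvolIn_self {T : Finset α} (hT : T.Nonempty)
    (hdeg : ∀ v ∈ T, 1 ≤ gdegIn G T v) :
    2 ≤ gvolIn G T T := by
  obtain ⟨v, hv⟩ := hT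
  have := hdeg v hv
  have := gdegIn_lt_card G hv
  have := card_le_gvolIn hdeg subset_rfl
  omega

variable [Fintype α]

lemma gcutIn_eq_sum (W S : Finset α) : gcutIn G W S = ∑ x ∈ S, gdegIn G (W \ S) x := by
  rw [gcutIn, card_filter, ← univ_product_univ, sum_product,
    ← sum_subset (subset_univ S) fun x _ hx => by simp [hx]]
  refine sum_congr rfl fun x hx => ?_
  rw [gdegIn, card_filter, ← sum_subset (subset_univ (W \ S)) fun y _ hy => by simp_all]
  exact sum_congr rfl fun y hy => by simp_all

lemma gcutIn_eq_gcutIn_sdiff {W S : Finset α} (hS : S ⊆ W) :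
    gcutIn G W S = gcutIn G W (W \ S) := by
  refine card_bij (fun p _ => (p.2, p.1)) (fun p hp => ?_) (fun p _ q _ h => ?_) fun p hp => ?_
  · simp only [mem_filter, mem_univ, true_and, mem_sdiff] at hp ⊢
    exact ⟨⟨hp.2.1, hp.2.2.1⟩, hS hp.1, fun h => h.2 hp.1, hp.2.2.2.symm⟩
  · simp only [Prod.mk.injEq] at h
    exact Prod.ext h.2 h.1
  · simp only [mem_filter, mem_univ, true_and, mem_sdiff, not_and, not_not] at hp
    exact ⟨(p.2, p.1), by simpa using ⟨hp.2.2.1 hp.2.1, hp.1.1, hp.1.2, hp.2.2.2.symm⟩, rfl⟩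

lemma gvolIn_self_eq_add_of_subset {A W : Finset α} (h : A ⊆ W) :
    gvolIn G W W = gvolIn G A A + gvolIn G (W \ A) (W \ A) + 2 * gcutIn G W A := by
  have hA : ∑ v ∈ A, gdegIn G W v = gvolIn G A A + gcutIn G W A := by
    rw [gcutIn_eq_sum, gvolIn, ← sum_add_distrib]
    exact sum_congr rfl fun v _ => gdegIn_eq_add_of_subset G h v
  have hB : ∑ v ∈ W \ A, gdegIn G W v = gvolIn G (W \ A) (W \ A) + gcutIn G W A := by
    rw [gcutIn_eq_gcutIn_sdiff G h, gcutIn_eq_sum, Finset.sdiff_sdiff_eq_self h, gvolIn,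
      ← sum_add_distrib]
    exact sum_congr rfl fun v _ => (gdegIn_eq_add_of_subset G h v).trans (add_comm _ _)
  rw [gvolIn, ← sum_sdiff h, hA, hB]
  ring

lemma gvolIn_self_eq_erase_add {W : Finset α} {v : α} (hv : v ∈ W) :
    gvolIn G W W = gvolIn G (W.erase v) (W.erase v) + 2 * gdegIn G W v := by
  have hcut : gcutIn G W {v} = gdegIn G W v := by
    rw [gcutIn_eq_sum, sum_singleton, gdegIn_eq_add_of_subset G (singleton_subset_iff.mpr hv),
      gdegIn_singleton_self, zero_add]
  rw [gvolIn_self_eq_add_of_subset G (singleton_subset_iff.mpr hv), hcut,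
    sdiff_singleton_eq_erase]
  simp [gvolIn, gdegIn_singleton_self]

lemma gvolIn_le_sq (W S : Finset α) : gvolIn G W S ≤ Fintype.card α ^ 2 := by
  calc gvolIn G W S ≤ #S • Fintype.card α := sum_le_card_nsmul _ _ _ fun v _ =>
        (card_le_card (filter_subset _ _)).trans (card_le_univ W)
    _ ≤ Fintype.card α ^ 2 := by
        rw [smul_eq_mul, sq]
        exact Nat.mul_le_mul_right _ (card_le_univ S)

lemma logb_gvolIn_le (W S : Finset α) :
    Real.logb 2 (gvolIn G W S) ≤ 2 * Real.logb 2 (Fintype.card α) := by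
  rcases Nat.eq_zero_or_pos (gvolIn G W S) with h0 | hpos
  · simpa [h0] using logb_two_natCast_nonneg (Fintype.card α)
  · calc Real.logb 2 (gvolIn G W S) ≤ Real.logb 2 ((Fintype.card α : ℝ) ^ 2) :=
          Real.logb_le_logb_of_le one_lt_two (by exact_mod_cast hpos)
            (by exact_mod_cast gvolIn_le_sq G W S)
      _ = 2 * Real.logb 2 (Fintype.card α) := by simp [Real.logb_pow]

variable {G}

lemma IsInducedExpander.mono {W : Finset α} {φ φ' : ℝ} (h : IsInducedExpander G W φ)
    (hφ : φ' ≤ φ) : IsInducedExpander G W φ' := fun S hS hne hne' =>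
  (mul_le_mul_of_nonneg_right hφ (le_min (Nat.cast_nonneg _) (Nat.cast_nonneg _))).trans
    (h S hS hne hne')

end InducedCounts

section ExpanderCore

def corePotential (Λ x : ℝ) : ℝ := 3 / 4 * x + x * Real.logb 2 x / (4 * Λ)

lemma corePotential_logb_self {x : ℝ} (hx : Real.logb 2 x ≠ 0) :
    corePotential (Real.logb 2 x) x = x := by
  rw [corePotential]
  field_simp
  ring

lemma corePotential_add_le {Λ : ℝ} (hΛ : 0 < Λ) (a b : ℕ) :
    corePotential Λ a + 3 / 4 * b ≤ corePotential Λ (a + b : ℕ) := by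
  have := natCast_mul_logb_le_of_le (Nat.le_add_right a b)
  have := div_le_div_of_nonneg_right this (by positivity : 0 ≤ 4 * Λ)
  simp only [corePotential]
  push_cast at this ⊢
  linarith

lemma corePotential_add_add_le {Λ a b : ℝ} (hΛ : 0 < Λ) (ha : 0 < a) (hab : a ≤ b) :
    corePotential Λ a + corePotential Λ b + a / (4 * Λ) ≤ corePotential Λ (a + b) := by
  have := div_le_div_of_nonneg_right (add_mul_logb_le ha hab) (by positivity : 0 ≤ 4 * Λ)
  rw [add_div, add_div] at this
  simp only [corePotential]
  linarith

variable {α : Type*} (G : SimpleGraph α) (U : Finset α)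

def IsHeavyIn (T : Finset α) : Prop :=
  T.Nonempty ∧ T ⊆ U ∧
    corePotential (Real.logb 2 (gvolIn G U U)) (gvolIn G U T) ≤ gvolIn G T T

variable {G U} {W : Finset α}

lemma IsHeavyIn.gdegIn_le_four_mul [Fintype α] (hW : IsHeavyIn G U W)
    (hmin : ∀ T, IsHeavyIn G U T → gvolIn G U W ≤ gvolIn G U T)
    (hΛ : 0 < Real.logb 2 (gvolIn G U U)) {v : α} (hv : v ∈ W) :
    gdegIn G U v ≤ 4 * gdegIn G W v := by
  by_contra! hlt
  have hσ : gvolIn G U (W.erase v) + gdegIn G U v = gvolIn G U W := sum_erase_add W _ hv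
  have hvol := gvolIn_self_eq_erase_add G hv
  have hpot := corePotential_add_le hΛ (gvolIn G U (W.erase v)) (gdegIn G U v)
  rw [hσ] at hpot
  have hW' : corePotential (Real.logb 2 (gvolIn G U U)) (gvolIn G U (W.erase v))
      < gvolIn G (W.erase v) (W.erase v) := by
    have h1 : (4 * gdegIn G W v : ℝ) < gdegIn G U v := by exact_mod_cast hlt
    have h2 : (gvolIn G W W : ℝ) = gvolIn G (W.erase v) (W.erase v) + 2 * gdegIn G W v := by
      exact_mod_cast hvol
    linarith [hW.2.2]
  rcases (W.erase v).eq_empty_or_nonempty with he | hne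
  · simp [he, gvolIn, corePotential] at hW'
  · have := hmin _ ⟨hne, (erase_subset v W).trans hW.2.1, hW'.le⟩
    omega

lemma IsHeavyIn.le_gcutIn [Fintype α] (hU : ∀ v ∈ U, 1 ≤ gdegIn G U v) (hW : IsHeavyIn G U W)
    (hmin : ∀ T, IsHeavyIn G U T → gvolIn G U W ≤ gvolIn G U T)
    (hΛ : 0 < Real.logb 2 (gvolIn G U U)) {A : Finset α} (hAW : A ⊆ W) (hA : A.Nonempty)
    (hB : (W \ A).Nonempty) (hAB : gvolIn G U A ≤ gvolIn G U (W \ A)) :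
    gvolIn G U A / (8 * Real.logb 2 (gvolIn G U U)) ≤ gcutIn G W A := by
  set Λ := Real.logb 2 (gvolIn G U U)
  by_contra! hcut
  have hWU := hW.2.1
  have hσ : gvolIn G U (W \ A) + gvolIn G U A = gvolIn G U W := sum_sdiff hAW
  have hσA := (card_pos.mpr hA).trans_le (card_le_gvolIn hU (hAW.trans hWU))
  have hσB := (card_pos.mpr hB).trans_le (card_le_gvolIn hU (sdiff_subset.trans hWU))
  have hAlight : (gvolIn G A A : ℝ) < corePotential Λ (gvolIn G U A) := by
    by_contra! hA'
    have := hmin A ⟨hA, hAW.trans hWU, hA'⟩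
    omega
  have hpot := corePotential_add_add_le hΛ (by exact_mod_cast hσA : (0 : ℝ) < gvolIn G U A)
    (by exact_mod_cast hAB : (gvolIn G U A : ℝ) ≤ gvolIn G U (W \ A))
  have hvol : (gvolIn G W W : ℝ)
      = gvolIn G A A + gvolIn G (W \ A) (W \ A) + 2 * gcutIn G W A := by
    exact_mod_cast gvolIn_self_eq_add_of_subset G hAW
  have hσR : (gvolIn G U A : ℝ) + gvolIn G U (W \ A) = gvolIn G U W := by
    exact_mod_cast (add_comm _ _).trans hσ
  have h8 : (gvolIn G U A : ℝ) / (8 * Λ) * 2 = gvolIn G U A / (4 * Λ) := by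
    field_simp; ring
  have hBheavy : IsHeavyIn G U (W \ A) := ⟨hB, sdiff_subset.trans hWU, by
    rw [hσR] at hpot
    linarith [hW.2.2]⟩
  have := hmin _ hBheavy
  omega

theorem exists_expander_core [Fintype α] (hU : ∀ v ∈ U, 1 ≤ gdegIn G U v)
    (hne : U.Nonempty) :
    ∃ W ⊆ U, W.Nonempty ∧ (∀ v ∈ W, gdegIn G U v ≤ 4 * gdegIn G W v) ∧
      IsInducedExpander G W (1 / (8 * Real.logb 2 (gvolIn G U U))) := by
  set Λ := Real.logb 2 (gvolIn G U U)
  have hΛ : 0 < Λ := by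
    have : (2 : ℝ) ≤ gvolIn G U U := by exact_mod_cast two_le_gvolIn_self hne hU
    exact Real.logb_pos one_lt_two (by linarith)
  have hUheavy : IsHeavyIn G U U := ⟨hne, subset_rfl, (corePotential_logb_self hΛ.ne').le⟩
  obtain ⟨W, hWmem, hWmin⟩ := exists_min_image (U.powerset.filter (IsHeavyIn G U)) (gvolIn G U)
    ⟨U, mem_filter.mpr ⟨mem_powerset_self U, hUheavy⟩⟩
  have hW : IsHeavyIn G U W := (mem_filter.mp hWmem).2
  have hmin (T : Finset α) (hT : IsHeavyIn G U T) : gvolIn G U W ≤ gvolIn G U T :=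
    hWmin T (mem_filter.mpr ⟨mem_powerset.mpr hT.2.1, hT⟩)
  have hsmall (A : Finset α) (hAW : A ⊆ W) (hA : A.Nonempty) (hB : (W \ A).Nonempty)
      (hAB : gvolIn G U A ≤ gvolIn G U (W \ A)) :
      1 / (8 * Λ) * min (gvolIn G W A : ℝ) (gvolIn G W (W \ A)) ≤ gcutIn G W A :=
    calc _ ≤ 1 / (8 * Λ) * (gvolIn G U A : ℝ) :=
          mul_le_mul_of_nonneg_left ((min_le_left _ _).trans
            (by exact_mod_cast gvolIn_mono_left hW.2.1 A)) (by positivity)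
      _ = gvolIn G U A / (8 * Λ) := one_div_mul_eq_div _ _
      _ ≤ _ := hW.le_gcutIn hU hmin hΛ hAW hA hB hAB
  refine ⟨W, hW.2.1, hW.1, fun v hv => hW.gdegIn_le_four_mul hmin hΛ hv,
    fun S hSW hS hWS => ?_⟩
  rcases le_total (gvolIn G U S) (gvolIn G U (W \ S)) with h | h
  · exact hsmall S hSW hS hWS h
  · have hSS : W \ (W \ S) = S := Finset.sdiff_sdiff_eq_self hSW
    have := hsmall (W \ S) sdiff_subset hWS (by rwa [hSS]) (by rwa [hSS])
    rwa [hSS, min_comm, ← gcutIn_eq_gcutIn_sdiff G hSW] at this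

end ExpanderCore

theorem exists_subset_gdeg_le_three_mul_gdegIn {α : Type*} [Fintype α] (G : SimpleGraph α)
    (U : Finset α) (hU : 2 * ∑ v ∈ U, gdeg G v < 3 * gvolIn G U U) :
    ∃ T ⊆ U, T.Nonempty ∧ ∀ v ∈ T, gdeg G v ≤ 3 * gdegIn G T v := by
  induction U using Finset.strongInduction with
  | H U ih =>
    by_contra! hno
    have hne : U.Nonempty := nonempty_iff_ne_empty.mpr fun h => by simp [h, gvolIn] at hU
    obtain ⟨w, hw, hlt⟩ := hno U subset_rfl hne
    have hvol := gvolIn_self_eq_erase_add G hw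
    have hsum := sum_erase_add U (gdeg G) hw
    obtain ⟨T, hT, hTne, hTdeg⟩ := ih (U.erase w) (erase_ssubset hw) (by omega)
    obtain ⟨x, hx, hxT⟩ := hno T (hT.trans (erase_subset w U)) hTne
    exact (hTdeg x hx).not_gt hxT

section Balls

variable {α : Type*} (G : SimpleGraph α) (K : Finset α) (x : α)

def ballIn (r : ℕ) : Finset α :=
  K.filter fun y => ∃ p : G.Walk x y, (∀ a ∈ p.support, a ∈ K) ∧ p.length ≤ r

variable {G K x}

lemma ballIn_mono {r s : ℕ} (h : r ≤ s) : ballIn G K x r ⊆ ballIn G K x s := fun y hy => by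
  obtain ⟨hyK, p, hp, hr⟩ := mem_filter.mp hy
  exact mem_filter.mpr ⟨hyK, p, hp, hr.trans h⟩

lemma self_mem_ballIn (hx : x ∈ K) (r : ℕ) : x ∈ ballIn G K x r :=
  mem_filter.mpr ⟨hx, .nil, by simpa using hx, by simp⟩

lemma mem_ballIn_succ {r : ℕ} {y z : α} (hz : z ∈ ballIn G K x r) (hy : y ∈ K)
    (hadj : G.Adj z y) : y ∈ ballIn G K x (r + 1) := by
  obtain ⟨-, p, hp, hr⟩ := mem_filter.mp hz
  refine mem_filter.mpr ⟨hy, p.concat hadj, fun a ha => ?_, by simpa using hr⟩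
  rw [SimpleGraph.Walk.support_concat, List.mem_append, List.mem_singleton] at ha
  exact ha.elim (hp a) fun h => h ▸ hy

lemma gcutIn_add_gvolIn_ballIn_le [Fintype α] (r : ℕ) :
    gcutIn G K (ballIn G K x r) + gvolIn G K (ballIn G K x r)
      ≤ gvolIn G K (ballIn G K x (r + 1)) := by
  set B := ballIn G K x r
  have hBK : B ⊆ K := filter_subset _ _
  have hcut : gcutIn G K B ≤ gvolIn G K (ballIn G K x (r + 1) \ B) := by
    rw [gcutIn_eq_gcutIn_sdiff G hBK, gcutIn_eq_sum, Finset.sdiff_sdiff_eq_self hBK]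
    calc ∑ y ∈ K \ B, gdegIn G B y ≤ ∑ y ∈ ballIn G K x (r + 1) \ B, gdegIn G B y :=
          sum_le_sum_of_ne_zero fun y hy hne => by
            obtain ⟨z, hz⟩ := card_ne_zero.mp hne
            exact mem_sdiff.mpr ⟨mem_ballIn_succ (mem_filter.mp hz).1 (mem_sdiff.mp hy).1
              (mem_filter.mp hz).2.symm, (mem_sdiff.mp hy).2⟩
      _ ≤ _ := sum_le_sum fun y _ => gdegIn_mono G hBK y
  have hsplit : gvolIn G K (ballIn G K x (r + 1) \ B) + gvolIn G K B
      = gvolIn G K (ballIn G K x (r + 1)) := sum_sdiff (ballIn_mono (Nat.le_add_right r 1))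
  omega

variable [Fintype α] {φ : ℝ}

lemma IsInducedExpander.pow_le_gvolIn_ballIn (hexp : IsInducedExpander G K φ) (hφ : 0 ≤ φ)
    (hx : x ∈ K) (hdeg : 1 ≤ gdegIn G K x) (r : ℕ)
    (hhalf : 2 * gvolIn G K (ballIn G K x r) ≤ gvolIn G K K) :
    (1 + φ) ^ r ≤ (gvolIn G K (ballIn G K x r) : ℝ) := by
  have hpos (s : ℕ) : 1 ≤ gvolIn G K (ballIn G K x s) :=
    hdeg.trans (single_le_sum (fun _ _ => Nat.zero_le _) (self_mem_ballIn hx s))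
  induction r with
  | zero => simpa using hpos 0
  | succ r ih =>
    set B := ballIn G K x r
    have hBK : B ⊆ K := filter_subset _ _
    have hmono : gvolIn G K B ≤ gvolIn G K (ballIn G K x (r + 1)) :=
      sum_le_sum_of_subset (ballIn_mono r.le_succ)
    have hsplit : gvolIn G K (K \ B) + gvolIn G K B = gvolIn G K K := sum_sdiff hBK
    have hKB : (K \ B).Nonempty := by
      rw [sdiff_nonempty]
      intro hKsub
      have : gvolIn G K K ≤ gvolIn G K B := sum_le_sum_of_subset hKsub
      have := hpos (r + 1)
      omega
    have hcut := hexp B hBK ⟨x, self_mem_ballIn hx r⟩ hKB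
    rw [min_eq_left (by exact_mod_cast (by omega : gvolIn G K B ≤ gvolIn G K (K \ B)))] at hcut
    have hgrow : (gcutIn G K B : ℝ) + gvolIn G K B ≤ gvolIn G K (ballIn G K x (r + 1)) := by
      exact_mod_cast gcutIn_add_gvolIn_ballIn_le (G := G) (K := K) (x := x) r
    calc (1 + φ) ^ (r + 1) = (1 + φ) * (1 + φ) ^ r := pow_succ' _ _
      _ ≤ (1 + φ) * gvolIn G K B := mul_le_mul_of_nonneg_left (ih (by omega)) (by linarith)
      _ ≤ _ := by linarith

theorem IsInducedExpander.exists_isPath_length_le (hexp : IsInducedExpander G K φ) (hφ : 0 < φ)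
    (hdeg : ∀ w ∈ K, 1 ≤ gdegIn G K w) {u v : α} (hu : u ∈ K) (hv : v ∈ K) :
    ∃ p : G.Walk u v, p.IsPath ∧ (∀ a ∈ p.support, a ∈ K) ∧
      (p.length : ℝ) ≤ 2 * ((2 / φ + 1) * (Real.logb 2 (gvolIn G K K) + 2)) := by
  have hvol : (1 : ℝ) ≤ gvolIn G K K := by
    exact_mod_cast (hdeg u hu).trans (single_le_sum (fun _ _ => Nat.zero_le _) hu)
  obtain ⟨M, hM, hlt⟩ := exists_lt_one_add_pow hφ hvol
  have hbig (z : α) (hz : z ∈ K) : gvolIn G K K < 2 * gvolIn G K (ballIn G K z M) := by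
    by_contra! h
    have h1 := hexp.pow_le_gvolIn_ballIn hφ.le hz (hdeg z hz) M h
    have h2 : gvolIn G K (ballIn G K z M) ≤ gvolIn G K K :=
      sum_le_sum_of_subset (filter_subset _ _)
    have h3 : (gvolIn G K (ballIn G K z M) : ℝ) ≤ gvolIn G K K := by exact_mod_cast h2
    linarith
  obtain ⟨w, hw⟩ : (ballIn G K u M ∩ ballIn G K v M).Nonempty := by
    rw [← not_disjoint_iff_nonempty_inter]
    intro hdisj
    have h1 : gvolIn G K (ballIn G K u M ∪ ballIn G K v M) ≤ gvolIn G K K :=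
      sum_le_sum_of_subset (union_subset (filter_subset _ _) (filter_subset _ _))
    rw [gvolIn, sum_union hdisj] at h1
    have := hbig u hu
    have := hbig v hv
    simp only [gvolIn] at *
    omega
  obtain ⟨-, p, hp, hpM⟩ := mem_filter.mp (mem_inter.mp hw).1
  obtain ⟨-, q, hq, hqM⟩ := mem_filter.mp (mem_inter.mp hw).2
  refine ⟨(p.append q.reverse).bypass, (p.append q.reverse).bypass_isPath, fun a ha => ?_, ?_⟩
  · have := (p.append q.reverse).support_bypass_subset_support ha
    rw [SimpleGraph.Walk.mem_support_append_iff, SimpleGraph.Walk.support_reverse,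
      List.mem_reverse] at this
    exact this.elim (hp a) (hq a)
  · have : (p.append q.reverse).bypass.length ≤ 2 * M := by
      have := (p.append q.reverse).length_bypass_le_length
      rw [SimpleGraph.Walk.length_append, SimpleGraph.Walk.length_reverse] at this
      omega
    calc ((p.append q.reverse).bypass.length : ℝ) ≤ 2 * M := by exact_mod_cast this
      _ ≤ _ := by linarith

end Balls

section Cores

variable {α : Type*} [Fintype α] (G : SimpleGraph α)

def IsCore (φ d D : ℝ) (K : Finset α) : Prop :=
  IsInducedExpander G K φ ∧ (∀ u ∈ K, d ≤ (gdegIn G K u : ℝ)) ∧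
    ∀ u ∈ K, ∀ v ∈ K, ∃ p : G.Walk u v, p.IsPath ∧ (∀ x ∈ p.support, x ∈ K) ∧
      (p.length : ℝ) ≤ D

variable {G}

lemma IsCore.mono {φ d D φ' d' D' : ℝ} {K : Finset α} (hK : IsCore G φ d D K)
    (hφ : φ' ≤ φ) (hd : d' ≤ d) (hD : D ≤ D') : IsCore G φ' d' D' K :=
  ⟨hK.1.mono hφ, fun u hu => hd.trans (hK.2.1 u hu), fun u hu v hv =>
    let ⟨p, hp, hsupp, hlen⟩ := hK.2.2 u hu v hv
    ⟨p, hp, hsupp, hlen.trans hD⟩⟩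

theorem exists_isCore_subset {T : Finset α} {h : ℕ} (hh : 1 ≤ h) (hT : T.Nonempty)
    (hdeg : ∀ v ∈ T, h ≤ 3 * gdegIn G T v) (hL : 1 ≤ Real.logb 2 (Fintype.card α)) :
    ∃ W ⊆ T, W.Nonempty ∧
      IsCore G (1 / 1000 / Real.logb 2 (Fintype.card α)) (h / 12)
        (1000 * Real.logb 2 (Fintype.card α) / (1 / 1000 / Real.logb 2 (Fintype.card α))) W := by
  set L := Real.logb 2 (Fintype.card α)
  have hT1 (v : α) (hv : v ∈ T) : 1 ≤ gdegIn G T v := by have := hdeg v hv; omega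
  obtain ⟨W, hWT, hWne, hW4, hWexp⟩ := exists_expander_core hT1 hT
  have hΛ : 1 ≤ Real.logb 2 (gvolIn G T T) :=
    one_le_logb_two (by exact_mod_cast two_le_gvolIn_self hT hT1)
  have hφ : 1 / 1000 / L ≤ 1 / (8 * Real.logb 2 (gvolIn G T T)) := by
    rw [div_div, one_div_le_one_div (by positivity) (by positivity)]
    linarith [logb_gvolIn_le G T T]
  have hW12 (v : α) (hv : v ∈ W) : h ≤ 12 * gdegIn G W v := by
    have := hdeg v (hWT hv); have := hW4 v hv; omega
  have hW1 (v : α) (hv : v ∈ W) : 1 ≤ gdegIn G W v := by have := hW12 v hv; omega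
  have hWexp' := hWexp.mono hφ
  refine ⟨W, hWT, hWne, hWexp', fun v hv => ?_, fun x hx y hy => ?_⟩
  · have : (h : ℝ) ≤ 12 * gdegIn G W v := by exact_mod_cast hW12 v hv
    linarith
  · obtain ⟨p, hp, hsupp, hlen⟩ := hWexp'.exists_isPath_length_le (by positivity) hW1 hx hy
    refine ⟨p, hp, hsupp, hlen.trans ?_⟩
    have hvol := logb_gvolIn_le G W W
    have hD : 1000 * L / (1 / 1000 / L) = 1000000 * L ^ 2 := by field_simp; ring
    have h2φ : 2 / (1 / 1000 / L) = 2000 * L := by field_simp; ring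
    rw [hD, h2φ]
    nlinarith

end Cores

section PathPacking

variable {α : Type*} {H : SimpleGraph α}

lemma SimpleGraph.Walk.IsPath.card_filter_start_mem_edges_le_one {u v : α} {p : H.Walk u v}
    (hp : p.IsPath) : #(p.edges.toFinset.filter (u ∈ ·)) ≤ 1 := by
  cases p with
  | nil => simp
  | @cons _ b _ hadj q =>
    have hu : u ∉ q.support := (SimpleGraph.Walk.cons_isPath_iff hadj q).mp hp |>.2
    refine card_le_one.mpr fun e₁ he₁ e₂ he₂ => ?_
    have key (e : Sym2 α)
        (he : e ∈ (SimpleGraph.Walk.cons hadj q).edges.toFinset.filter (u ∈ ·)) :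
        e = s(u, b) := by
      simp only [mem_filter, List.mem_toFinset, SimpleGraph.Walk.edges_cons, List.mem_cons] at he
      exact he.1.resolve_right fun h => hu (SimpleGraph.Walk.mem_support_of_mem_edges h he.2)
    rw [key e₁ he₁, key e₂ he₂]

variable (H) in
/-- The edge sets `F` allowed here are those of `m < t` paths of length at most `ℓ` starting at
`u`, so adding such paths greedily never gets stuck. -/
def RobustlyReaches (u : α) (X : Finset α) (ℓ t : ℕ) : Prop :=
  ∀ m < t, ∀ F : Finset (Sym2 α), #F ≤ m * ℓ → #(F.filter (u ∈ ·)) ≤ m →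
    ∃ y ∈ X, ∃ p : (H.deleteEdges ↑F).Walk u y, p.length ≤ ℓ

theorem RobustlyReaches.exists_edgeDisjoint_paths {u : α} {X : Finset α} {ℓ t : ℕ}
    (hreach : RobustlyReaches H u X ℓ t) :
    ∃ (e : Fin t → α) (P : ∀ i, H.Walk u (e i)),
      (∀ i, (P i).IsPath ∧ (P i).length ≤ ℓ ∧ e i ∈ X) ∧
      ∀ i j, i ≠ j → ∀ ed ∈ (P i).edges, ed ∉ (P j).edges := by
  suffices ∀ s ≤ t, ∃ f : Fin s → Σ y, H.Walk u y,
      (∀ i, (f i).2.IsPath ∧ (f i).2.length ≤ ℓ ∧ (f i).1 ∈ X) ∧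
      ∀ i j, i ≠ j → ∀ ed ∈ (f i).2.edges, ed ∉ (f j).2.edges by
    obtain ⟨f, hf, hdisj⟩ := this t le_rfl
    exact ⟨fun i => (f i).1, fun i => (f i).2, hf, hdisj⟩
  intro s hs
  induction s with
  | zero => exact ⟨Fin.elim0, fun i => i.elim0, fun i => i.elim0⟩
  | succ s ih =>
    obtain ⟨f, hf, hdisj⟩ := ih (by omega)
    set F := univ.biUnion fun i => (f i).2.edges.toFinset
    have hF : #F ≤ s * ℓ := by
      refine card_biUnion_le.trans ((sum_le_card_nsmul _ _ ℓ fun i _ => ?_).trans (by simp))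
      exact (List.toFinset_card_le _).trans ((f i).2.length_edges ▸ (hf i).2.1)
    have hFu : #(F.filter (u ∈ ·)) ≤ s := by
      rw [filter_biUnion]
      refine card_biUnion_le.trans ((sum_le_card_nsmul _ _ 1 fun i _ => ?_).trans (by simp))
      exact (hf i).1.card_filter_start_mem_edges_le_one
    obtain ⟨y, hy, p, hpℓ⟩ := hreach s (by omega) F hF hFu
    set q := p.bypass.mapLe (H.deleteEdges_le _)
    have hqF (ed : Sym2 α) (hed : ed ∈ q.edges) : ed ∉ F := by
      rw [SimpleGraph.Walk.edges_mapLe_eq_edges] at hed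
      have := (p.bypass.edges_subset_edgeSet hed)
      rw [SimpleGraph.edgeSet_deleteEdges] at this
      exact this.2
    have hfF (i : Fin s) (ed : Sym2 α) (hed : ed ∈ (f i).2.edges) : ed ∈ F :=
      mem_biUnion.mpr ⟨i, mem_univ _, List.mem_toFinset.mpr hed⟩
    refine ⟨Fin.cons (α := fun _ => Σ y, H.Walk u y) ⟨y, q⟩ f, fun i => ?_,
      fun i j hij => ?_⟩
    · cases i using Fin.cases with
      | zero =>
        rw [Fin.cons_zero]
        exact ⟨p.bypass_isPath.mapLe _,
          by simpa [q] using p.length_bypass_le_length.trans hpℓ, hy⟩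
      | succ i => rw [Fin.cons_succ]; exact hf i
    · cases i using Fin.cases with
      | zero =>
        cases j using Fin.cases with
        | zero => exact absurd rfl hij
        | succ j =>
          rw [Fin.cons_zero, Fin.cons_succ]
          exact fun ed hed hedj => hqF ed hed (hfF j ed hedj)
      | succ i =>
        cases j using Fin.cases with
        | zero =>
          rw [Fin.cons_zero, Fin.cons_succ]
          exact fun ed hed hedq => hqF ed hedq (hfF i ed hed)
        | succ j =>
          rw [Fin.cons_succ, Fin.cons_succ]
          exact hdisj i j fun h => hij (h ▸ rfl)

end PathPacking

section Families

variable {α : Type*} [Fintype α]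

theorem exists_maximal_pairwiseDisjoint (good : Finset α → Prop) :
    ∃ F : Finset (Finset α), (∀ K ∈ F, good K) ∧
      (F : Set (Finset α)).PairwiseDisjoint id ∧
      ∀ K, good K → K.Nonempty → ¬Disjoint K (F.biUnion id) := by
  set fam := fun F : Finset (Finset α) =>
    (∀ K ∈ F, good K) ∧ (F : Set (Finset α)).PairwiseDisjoint id
  obtain ⟨F, hFmem, hFmax⟩ := exists_max_image (univ.filter fam) (fun F => ∑ K ∈ F, #K)
    ⟨∅, mem_filter.mpr ⟨mem_univ _, by simp, by simp⟩⟩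
  obtain ⟨hgood, hdisj⟩ := (mem_filter.mp hFmem).2
  refine ⟨F, hgood, hdisj, fun K hK hne hKF => ?_⟩
  have hKnot : K ∉ F := fun hmem => hne.ne_empty (disjoint_self.mp
    (hKF.mono_right (subset_biUnion_of_mem id hmem)))
  have hins : fam (insert K F) := by
    refine ⟨forall_mem_insert _ _ _ |>.mpr ⟨hK, hgood⟩, ?_⟩
    rw [coe_insert]
    exact hdisj.insert fun K' hK' _ => hKF.mono_right (subset_biUnion_of_mem id hK')
  have := hFmax _ (mem_filter.mpr ⟨mem_univ _, hins⟩)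
  rw [sum_insert hKnot] at this
  exact hne.card_pos.ne' (by omega)

lemma card_mul_le_of_pairwiseDisjoint {F : Finset (Finset α)}
    (hF : (F : Set (Finset α)).PairwiseDisjoint id) {a : ℝ} (ha : ∀ K ∈ F, a ≤ #K) :
    #F * a ≤ Fintype.card α := by
  calc (#F : ℝ) * a = ∑ _K ∈ F, a := by rw [sum_const, nsmul_eq_mul]
    _ ≤ ∑ K ∈ F, (#K : ℝ) := sum_le_sum ha
    _ = #(F.biUnion id) := by rw [card_biUnion hF]; push_cast; rfl
    _ ≤ Fintype.card α := by exact_mod_cast card_le_univ _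

end Families

lemma sum_card_filter_mem_le {α : Type*} (F : Finset (Sym2 α)) (T : Finset α) :
    ∑ v ∈ T, #(F.filter (v ∈ ·)) ≤ 2 * #F :=
  calc ∑ v ∈ T, #(F.filter (v ∈ ·)) = ∑ e ∈ F, #(T.filter (· ∈ e)) :=
        sum_card_bipartiteAbove_eq_sum_card_bipartiteBelow _
    _ ≤ ∑ _e ∈ F, 2 := sum_le_sum fun e _ => (card_le_card (t := e.toFinset)
        fun v hv => Sym2.mem_toFinset.mpr (mem_filter.mp hv).2).trans (by
          rw [Sym2.card_toFinset]; split_ifs <;> norm_num)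
    _ = 2 * #F := by rw [sum_const, smul_eq_mul, mul_comm]

section DeletedEdges

variable {α : Type*} [Fintype α] (H : SimpleGraph α) (F : Finset (Sym2 α))

lemma gdeg_le_gdegIn_add_card_filter_mem (U : Finset α) (v : α)
    (hU : ∀ y, (H.deleteEdges ↑F).Adj v y → y ∈ U) :
    gdeg H v ≤ gdegIn H U v + #(F.filter (v ∈ ·)) := by
  have hsub : univ.filter (fun y => H.Adj v y)
      ⊆ U.filter (fun y => H.Adj v y) ∪ univ.filter (fun y => s(v, y) ∈ F) := fun y hy => by
    have hadj := (mem_filter.mp hy).2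
    by_cases he : s(v, y) ∈ F
    · exact mem_union_right _ (mem_filter.mpr ⟨mem_univ y, he⟩)
    · exact mem_union_left _
        (mem_filter.mpr ⟨hU y (SimpleGraph.deleteEdges_adj.mpr ⟨hadj, he⟩), hadj⟩)
  have hinj : #(univ.filter (fun y => s(v, y) ∈ F)) ≤ #(F.filter (v ∈ ·)) :=
    card_le_card_of_injOn (fun y => s(v, y))
      (fun y hy => by simpa using (mem_filter.mp hy).2)
      (fun _ _ _ _ h => Sym2.congr_right.mp h)
  exact (card_le_card hsub).trans ((card_union_le _ _).trans (by rw [gdegIn]; omega))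

variable {H F} {u : α}

lemma exists_adj_deleteEdges (hu : #(F.filter (u ∈ ·)) < gdeg H u) :
    ∃ v, (H.deleteEdges ↑F).Adj u v := by
  set N := univ.filter ((H.deleteEdges ↑F).Adj u)
  have := gdeg_le_gdegIn_add_card_filter_mem H F N u fun y hy => mem_filter.mpr ⟨mem_univ y, hy⟩
  obtain ⟨v, hv⟩ := card_pos.mp (by omega : 0 < gdegIn H N u)
  exact ⟨v, (mem_filter.mp (mem_filter.mp hv).1).2⟩

lemma gdeg_lt_card_ballIn_one_add :
    gdeg H u < #(ballIn (H.deleteEdges ↑F) univ u 1) + #(F.filter (u ∈ ·)) := by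
  have := gdeg_le_gdegIn_add_card_filter_mem H F (ballIn (H.deleteEdges ↑F) univ u 1) u
    fun y hy => mem_ballIn_succ (self_mem_ballIn (mem_univ u) 0) (mem_univ y) hy
  have := gdegIn_lt_card H (self_mem_ballIn (G := H.deleteEdges ↑F) (mem_univ u) 1)
  omega

lemma sum_gdeg_ballIn_le (r : ℕ) :
    ∑ v ∈ ballIn (H.deleteEdges ↑F) univ u r, gdeg H v ≤
      gvolIn H (ballIn (H.deleteEdges ↑F) univ u (r + 1))
        (ballIn (H.deleteEdges ↑F) univ u (r + 1)) + 2 * #F := by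
  set B := ballIn (H.deleteEdges ↑F) univ u
  calc ∑ v ∈ B r, gdeg H v
        ≤ ∑ v ∈ B r, (gdegIn H (B (r + 1)) v + #(F.filter (v ∈ ·))) :=
        sum_le_sum fun v hv => gdeg_le_gdegIn_add_card_filter_mem H F _ v fun y hy =>
          mem_ballIn_succ hv (mem_univ y) hy
    _ ≤ gvolIn H (B (r + 1)) (B (r + 1)) + 2 * #F := by
        rw [sum_add_distrib]
        exact add_le_add (sum_le_sum_of_subset (ballIn_mono r.le_succ))
          (sum_card_filter_mem_le F _)

theorem exists_dense_ballIn_deleteEdges {h m ℓ : ℕ} (hmin : ∀ v, h ≤ gdeg H v)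
    (hm : 3 * m < 2 * h) (hF : #F ≤ m * ℓ) (hFu : #(F.filter (u ∈ ·)) ≤ m)
    (hℓh : 36 * ℓ ≤ h)
    (hℓ : (Fintype.card α : ℝ) ^ 2 < (4 / 3) ^ (ℓ - 2)) :
    ∃ U : Finset α, (∀ y ∈ U, ∃ p : (H.deleteEdges ↑F).Walk u y, p.length ≤ ℓ) ∧
      2 * ∑ v ∈ U, gdeg H v < 3 * gvolIn H U U := by
  set B := ballIn (H.deleteEdges ↑F) univ u
  let f (j : ℕ) : ℝ := ∑ v ∈ B (j + 1), gdeg H v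
  have hB1 : h + 1 ≤ #(B 1) + m := by
    have : gdeg H u < #(B 1) + #(F.filter (u ∈ ·)) := gdeg_lt_card_ballIn_one_add
    have := hmin u
    omega
  have hf0 : (#(B 1) * h : ℝ) ≤ f 0 := by
    have : #(B 1) * h ≤ ∑ v ∈ B 1, gdeg H v := by
      simpa using card_nsmul_le_sum (B 1) (gdeg H) h fun v _ => hmin v
    simp only [f]
    exact_mod_cast this
  have hf0' : 1 ≤ f 0 := by
    have : 1 ≤ #(B 1) * h := Nat.mul_pos (card_pos.mpr ⟨u, self_mem_ballIn (mem_univ u) 1⟩)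
      (by omega)
    have : (1 : ℝ) ≤ #(B 1) * h := by exact_mod_cast this
    linarith
  have hN (j : ℕ) : f j ≤ Fintype.card α ^ 2 := by
    have : ∑ v ∈ B (j + 1), gdeg H v ≤ Fintype.card α ^ 2 := gvolIn_le_sq H univ _
    simp only [f]
    exact_mod_cast this
  obtain ⟨j, hj, hgrow⟩ := exists_le_mul_of_lt_mul_pow (f := f) (q := 4 / 3) (m := ℓ - 2)
    (by norm_num) (fun j _ => hN j)
    (by nlinarith [pow_pos (by norm_num : (0 : ℝ) < 4 / 3) (ℓ - 2)])
  refine ⟨B (j + 2), fun y hy => ?_, ?_⟩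
  · obtain ⟨-, p, -, hp⟩ := mem_filter.mp hy
    exact ⟨p, by omega⟩
  · have hvol : f j ≤ gvolIn H (B (j + 2)) (B (j + 2)) + 2 * #F := by
      have : ∑ v ∈ B (j + 1), gdeg H v ≤ gvolIn H (B (j + 2)) (B (j + 2)) + 2 * #F :=
        sum_gdeg_ballIn_le (j + 1)
      simp only [f]
      exact_mod_cast this
    have hmono : f 0 ≤ f j := by
      have : ∑ v ∈ B 1, gdeg H v ≤ ∑ v ∈ B (j + 1), gdeg H v :=
        sum_le_sum_of_subset (ballIn_mono (by omega))
      simp only [f]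
      exact_mod_cast this
    have hFR : (#F : ℝ) ≤ m * ℓ := by exact_mod_cast hF
    have hB1R : (h : ℝ) + 1 ≤ #(B 1) + m := by exact_mod_cast hB1
    have hmR : 3 * (m : ℝ) + 1 ≤ 2 * h := by exact_mod_cast hm
    have hℓR : 36 * (m * ℓ : ℝ) ≤ m * h := by
      have : (36 * ℓ : ℝ) ≤ h := by exact_mod_cast hℓh
      nlinarith [(Nat.cast_nonneg m : (0 : ℝ) ≤ m)]
    -- `18 |F| ≤ m h / 2 < h² / 3 ≤ vol_H(B 1)`: the deleted edges are negligible.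
    have hsmall : 18 * (#F : ℝ) < f j := by nlinarith
    have hgrow' : (∑ v ∈ B (j + 2), gdeg H v : ℝ) ≤ 4 / 3 * f j := hgrow
    have : (2 * ∑ v ∈ B (j + 2), gdeg H v : ℝ) < 3 * gvolIn H (B (j + 2)) (B (j + 2)) := by
      push_cast at hvol ⊢
      linarith
    exact_mod_cast this

end DeletedEdges

lemma adj_of_mem_pair {α : Type*} {H : SimpleGraph α} {a b x y : α} (hab : H.Adj a b)
    (hx : x ∈ ({a, b} : Finset α)) (hy : y ∈ ({a, b} : Finset α)) (hxy : x ≠ y) :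
    H.Adj x y := by
  simp only [mem_insert, mem_singleton] at hx hy
  rcases hx with rfl | rfl <;> rcases hy with rfl | rfl <;> first | exact absurd rfl hxy | skip
  exacts [hab, hab.symm]

section Regimes

variable {α : Type*} [Fintype α] {H : SimpleGraph α}

lemma isCore_pair {a b : α} (hab : H.Adj a b) {φ : ℝ} (hφ : φ ≤ 1) :
    IsCore H φ 1 1 {a, b} := by
  set K : Finset α := {a, b}
  have hK : #K = 2 := card_pair hab.ne
  refine ⟨fun S hSK ⟨x, hx⟩ ⟨y, hy⟩ => ?_, fun v hv => ?_, fun u hu v hv => ?_⟩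
  · have hxy : x ≠ y := fun h => (mem_sdiff.mp hy).2 (h ▸ hx)
    obtain ⟨hyK, hyS⟩ := mem_sdiff.mp hy
    have hcut : 1 ≤ gcutIn H K S := card_pos.mpr ⟨(x, y), mem_filter.mpr
      ⟨mem_univ _, hx, hyK, hyS, adj_of_mem_pair hab (hSK hx) hyK hxy⟩⟩
    have hvol : gvolIn H K (K \ S) + gvolIn H K S ≤ 2 := by
      rw [gvolIn, gvolIn, sum_sdiff hSK]
      calc ∑ v ∈ K, gdegIn H K v ≤ ∑ _v ∈ K, 1 := sum_le_sum fun v hv => by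
            have := gdegIn_lt_card H hv; omega
        _ = 2 := by simp [hK]
    have hmin : min (gvolIn H K S : ℝ) (gvolIn H K (K \ S)) ≤ 1 := by
      rcases le_total (gvolIn H K S) (gvolIn H K (K \ S)) with h | h
      · exact (min_le_left _ _).trans (by exact_mod_cast (by omega : gvolIn H K S ≤ 1))
      · exact (min_le_right _ _).trans (by exact_mod_cast (by omega : gvolIn H K (K \ S) ≤ 1))
    have : (1 : ℝ) ≤ gcutIn H K S := by exact_mod_cast hcut
    nlinarith [mul_nonneg (sub_nonneg.mpr hφ)
      (le_min (Nat.cast_nonneg _) (Nat.cast_nonneg _) :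
        (0 : ℝ) ≤ min (gvolIn H K S : ℝ) (gvolIn H K (K \ S)))]
  · obtain ⟨w, hw, hvw⟩ : ∃ w ∈ K, v ≠ w := by
      simp only [K, mem_insert, mem_singleton] at hv ⊢
      rcases hv with rfl | rfl
      exacts [⟨b, Or.inr rfl, hab.ne⟩, ⟨a, Or.inl rfl, hab.ne'⟩]
    exact_mod_cast card_pos.mpr ⟨w, mem_filter.mpr ⟨hw, adj_of_mem_pair hab hv hw hvw⟩⟩
  · by_cases huv : u = v
    · subst huv
      exact ⟨.nil, by simp, by simpa using hu, by simp⟩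
    · have h := adj_of_mem_pair hab hu hv huv
      refine ⟨h.toWalk, h.isPath_toWalk, fun x hx => ?_, by simp⟩
      simp only [SimpleGraph.Adj.support_toWalk, List.mem_cons,
        List.not_mem_nil, or_false] at hx
      rcases hx with rfl | rfl
      exacts [hu, hv]

variable (H) in
def IsCoreDecomposition (h : ℕ) (c C : ℝ) (ℓ : ℕ) (F : Finset (Finset α)) : Prop :=
  (F : Set (Finset α)).PairwiseDisjoint id ∧
    (#F : ℝ) ≤ C * Fintype.card α * Real.logb 2 (Fintype.card α) / h ∧
    (∀ K ∈ F, IsCore H (c / Real.logb 2 (Fintype.card α))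
      (c / Real.logb 2 (Fintype.card α) * h / 3)
      (C * Real.logb 2 (Fintype.card α) / (c / Real.logb 2 (Fintype.card α))) K) ∧
    (ℓ : ℝ) ≤ C * Real.logb 2 (Fintype.card α) ∧
    ∀ u, (∀ K ∈ F, u ∉ K) →
      RobustlyReaches H u (F.biUnion id) ℓ ⌈2 * (h : ℝ) / 3⌉₊

theorem exists_coreDecomposition_of_le {h : ℕ} (hh : 1 ≤ h) (hmin : ∀ v, h ≤ gdeg H v)
    (hL : 1 ≤ Real.logb 2 (Fintype.card α))
    (hsmall : (h : ℝ) ≤ 1000 * Real.logb 2 (Fintype.card α)) :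
    ∃ F ℓ, IsCoreDecomposition H h (1 / 1000) 1000 ℓ F := by
  set L := Real.logb 2 (Fintype.card α)
  obtain ⟨F, hgood, hdisj, hmax⟩ :=
    exists_maximal_pairwiseDisjoint fun K : Finset α => ∃ a b, H.Adj a b ∧ K = {a, b}
  refine ⟨F, 1, hdisj, ?_, fun K hK => ?_, by push_cast; linarith, fun u hu => ?_⟩
  · have := card_mul_le_of_pairwiseDisjoint hdisj (a := 2) fun K hK => by
      obtain ⟨a, b, hab, rfl⟩ := hgood K hK
      exact_mod_cast (card_pair hab.ne).ge
    have hh' : (0 : ℝ) < h := by exact_mod_cast hh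
    rw [le_div_iff₀ hh']
    nlinarith [(Nat.cast_nonneg #F : (0 : ℝ) ≤ #F)]
  · obtain ⟨a, b, hab, rfl⟩ := hgood K hK
    have hD : 1000 * L / (1 / 1000 / L) = 1000000 * L ^ 2 := by field_simp; ring
    refine (isCore_pair hab ?_).mono le_rfl ?_ ?_
    · rw [div_le_one (by positivity)]; linarith
    · rw [div_div, div_mul_eq_mul_div, div_div, div_le_one (by positivity)]; linarith
    · rw [hD]; nlinarith
  · have huX : u ∉ F.biUnion id := by simpa using hu
    intro m hm F' _ hFu
    have hmh : m < gdeg H u := by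
      have := Nat.lt_ceil.mp hm
      have : (m : ℝ) < h := by linarith
      exact (Nat.cast_lt.mp this).trans_le (hmin u)
    obtain ⟨v, hv⟩ := exists_adj_deleteEdges (hFu.trans_lt hmh)
    refine ⟨v, ?_, hv.toWalk, by simp⟩
    by_contra hvX
    refine hmax {u, v} ⟨u, v, hv.1, rfl⟩ (insert_nonempty u {v})
      (disjoint_left.mpr fun x hx => ?_)
    simp only [mem_insert, mem_singleton] at hx
    rcases hx with rfl | rfl
    exacts [huX, hvX]

theorem exists_coreDecomposition_of_gt {h : ℕ} (hmin : ∀ v, h ≤ gdeg H v)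
    (hL : 1 ≤ Real.logb 2 (Fintype.card α))
    (hlarge : 1000 * Real.logb 2 (Fintype.card α) < h) :
    ∃ F ℓ, IsCoreDecomposition H h (1 / 1000) 1000 ℓ F := by
  set L := Real.logb 2 (Fintype.card α)
  have hh : 1 ≤ h := by exact_mod_cast (by linarith : (1 : ℝ) ≤ h)
  have hn : (1 : ℝ) ≤ Fintype.card α := by
    rcases Nat.eq_zero_or_pos (Fintype.card α) with h0 | h0
    · norm_num [L, h0] at hL
    · exact_mod_cast h0
  obtain ⟨ℓ, hℓ, hℓL⟩ := exists_sq_lt_pow hn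
  obtain ⟨F, hgood, hdisj, hmax⟩ := exists_maximal_pairwiseDisjoint fun K : Finset α =>
    K.Nonempty ∧ IsCore H (1 / 1000 / L) (h / 12) (1000 * L / (1 / 1000 / L)) K
  have hh' : (0 : ℝ) < h := by exact_mod_cast hh
  refine ⟨F, ℓ, hdisj, ?_, fun K hK => (hgood K hK).2.mono le_rfl ?_ le_rfl, by linarith,
    fun u hu => ?_⟩
  · have := card_mul_le_of_pairwiseDisjoint hdisj (a := h / 12) fun K hK => by
      obtain ⟨⟨v, hv⟩, hcore⟩ := hgood K hK
      exact (hcore.2.1 v hv).trans (by exact_mod_cast (gdegIn_lt_card H hv).le)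
    rw [le_div_iff₀ hh']
    nlinarith
  · rw [div_div, div_mul_eq_mul_div, div_div, div_le_div_iff₀ (by positivity) (by norm_num)]
    nlinarith
  · have huX : u ∉ F.biUnion id := by simpa using hu
    intro m hm F' hF' hFu
    by_contra! hno
    have hm3 : 3 * m < 2 * h := by
      have := Nat.lt_ceil.mp hm
      exact_mod_cast (by linarith : (3 * m : ℝ) < 2 * h)
    have h36 : 36 * ℓ ≤ h := by exact_mod_cast (by linarith : (36 * ℓ : ℝ) ≤ h)
    obtain ⟨U, hUreach, hUdense⟩ := exists_dense_ballIn_deleteEdges hmin hm3 hF' hFu h36 hℓ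
    obtain ⟨T, hTU, hTne, hTdeg⟩ := exists_subset_gdeg_le_three_mul_gdegIn H U hUdense
    obtain ⟨W, hWT, hWne, hWcore⟩ :=
      exists_isCore_subset hh hTne (fun v hv => (hmin v).trans (hTdeg v hv)) hL
    refine hmax W ⟨hWne, hWcore⟩ hWne (disjoint_left.mpr fun y hyW hyX => ?_)
    obtain ⟨p, hp⟩ := hUreach y (hTU (hWT hyW))
    exact (hno y hyX p).not_ge hp

end Regimes

/-- Expanding core decomposition: there are constants `c, C > 0` such that every
finite simple graph `H` on `n ≥ 2` vertices with minimum degree at least `h ≥ 1`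
admits a collection `F` of at most `C·n·log₂ n / h` vertex-disjoint induced subgraphs
(cores) such that, with `φ = c / log₂ n`: every core is a `φ`-expander whose vertices
have degree at least `φ·h/3` inside the core and whose vertices are pairwise at
distance at most `C·log₂ n / φ` within the core; and every vertex of `H` outside all
cores is joined to the union of the cores by at least `2h/3` pairwise edge-disjoint
paths of length at most `C·log₂ n` each. -/
theorem statement5 :
    ∃ c C : ℝ, 0 < c ∧ 0 < C ∧
      ∀ (V : Type u) [Fintype V] (H : SimpleGraph V) (h : ℕ),
        1 ≤ h → 2 ≤ Fintype.card V →
        (∀ v : V, h ≤ gdeg H v) →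
        ∃ F : Finset (Finset V),
          (∀ K ∈ F, ∀ K' ∈ F, K ≠ K' → Disjoint K K') ∧
          (F.card : ℝ) ≤ C * (Fintype.card V : ℝ) * Real.logb 2 (Fintype.card V) / (h : ℝ) ∧
          (∀ K ∈ F,
            IsInducedExpander H K (c / Real.logb 2 (Fintype.card V)) ∧
            (∀ u ∈ K,
              (c / Real.logb 2 (Fintype.card V)) * (h : ℝ) / 3 ≤ (gdegIn H K u : ℝ)) ∧
            (∀ u ∈ K, ∀ v ∈ K, ∃ p : H.Walk u v, p.IsPath ∧
              (∀ x ∈ p.support, x ∈ K) ∧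
              (p.length : ℝ) ≤ C * Real.logb 2 (Fintype.card V) /
                (c / Real.logb 2 (Fintype.card V)))) ∧
          (∀ u : V, (∀ K ∈ F, u ∉ K) →
            ∃ (t : ℕ) (e : Fin t → V) (P : ∀ i : Fin t, H.Walk u (e i)),
              (2 * (h : ℝ)) / 3 ≤ (t : ℝ) ∧
              (∀ i : Fin t, (P i).IsPath ∧
                ((P i).length : ℝ) ≤ C * Real.logb 2 (Fintype.card V) ∧
                ∃ K ∈ F, e i ∈ K) ∧
              (∀ i j : Fin t, i ≠ j →
                ∀ ed ∈ (P i).edges, ed ∉ (P j).edges)) := by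
  refine ⟨1 / 1000, 1000, by norm_num, by norm_num, fun V _ H h hh hn hmin => ?_⟩
  have hL : 1 ≤ Real.logb 2 (Fintype.card V) := one_le_logb_two (by exact_mod_cast hn)
  obtain ⟨F, ℓ, hdisj, hcard, hcores, hℓ, hreach⟩ :=
    (le_or_gt (h : ℝ) (1000 * Real.logb 2 (Fintype.card V))).elim
      (exists_coreDecomposition_of_le hh hmin hL) (exists_coreDecomposition_of_gt hmin hL)
  refine ⟨F, fun K hK K' hK' => hdisj hK hK', hcard, hcores, fun u hu => ?_⟩
  obtain ⟨e, P, hP, hPdisj⟩ := (hreach u hu).exists_edgeDisjoint_paths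
  refine ⟨_, e, P, Nat.le_ceil _, fun i => ⟨(hP i).1, ?_, ?_⟩, hPdisj⟩
  · exact (Nat.cast_le.mpr (hP i).2.1).trans hℓ
  · simpa using (hP i).2.2
end
end

section
/- Let H be a finite simple graph with m ≥ 2 edges, let ℓ ≥ 1 be a real number, and let S and T be nonempty sets of vertices of H such that every path in H from a vertex of S to a vertex of T has length greater than ℓ (in particular, this holds if no vertex of S is connected to any vertex of T). Then there exists a set Z ⊆ V(H) with vol_H(Z) ≤ vol(H)/2 and δ_H(Z) ≤ (8·log₂ m/ℓ)·vol_H(Z), such that S ⊆ Z or T ⊆ Z. -/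
open Finset
open scoped Classical

noncomputable section

variable {V : Type*} [Fintype V]

/-- The volume of a vertex set `S` in `G`: the sum of degrees of its vertices. -/
def gvol (G : SimpleGraph V) (S : Finset V) : ℕ := ∑ v ∈ S, gdeg G v

/-- The number of edges of `G` with exactly one endpoint in `S`. -/
def gcut (G : SimpleGraph V) (S : Finset V) : ℕ :=
  (Finset.univ.filter fun p : V × V => p.1 ∈ S ∧ p.2 ∉ S ∧ G.Adj p.1 p.2).card

/-- The number of edges of `G`. -/
def edgeCount (G : SimpleGraph V) : ℕ :=
  (Finset.univ.filter fun p : V × V => G.Adj p.1 p.2).card / 2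

/-!
Grow balls `B_i` around `S` and around `T` for `i ≤ k = ⌊ℓ/2⌋`. The two balls of radius `k`
are disjoint, so one of them, say around `A`, has volume at most `vol(H)/2`. If no ball
`B_i ⊆ B_k` around `A` has `δ(B_i) ≤ α vol(B_i)` with `α = 8 log₂ m / ℓ`, then each step
multiplies the volume by `1 + α`, since the cut edges of `B_i` land in `B_{i+1}`. Then
`2m = vol(H) ≥ (1 + α)^(k+1) ≥ 2^(α (k+1)) > 2^(α ℓ / 2) = m⁴`, which is absurd.
-/

section Volume

variable (G : SimpleGraph V)

theorem gdeg_eq_degree (v : V) : gdeg G v = G.degree v := by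
  rw [gdeg, ← SimpleGraph.card_neighborFinset_eq_degree, SimpleGraph.neighborFinset_eq_filter]

theorem gvol_mono {Z W : Finset V} (h : Z ⊆ W) : gvol G Z ≤ gvol G W :=
  sum_le_sum_of_subset h

theorem gvol_union_of_disjoint {Z W : Finset V} (h : Disjoint Z W) :
    gvol G (Z ∪ W) = gvol G Z + gvol G W :=
  sum_union h

theorem card_filter_adj_fst_mem (Z : Finset V) :
    #{p : V × V | p.1 ∈ Z ∧ G.Adj p.1 p.2} = gvol G Z := by
  rw [card_eq_sum_card_fiberwise (f := Prod.fst) (t := Z) fun p hp => (mem_filter.1 hp).2.1]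
  refine sum_congr rfl fun v hv => card_bij (fun p _ => p.2) ?_ ?_ ?_
  · intro p hp
    simp only [mem_filter, mem_univ, true_and] at hp ⊢
    exact hp.2 ▸ hp.1.2
  · intro p hp q hq hpq
    simp only [mem_filter, mem_univ, true_and] at hp hq
    exact Prod.ext (hp.2.trans hq.2.symm) hpq
  · intro u hu
    simp only [mem_filter, mem_univ, true_and] at hu
    exact ⟨(v, u), by simp [hv, hu], rfl⟩

theorem gvol_univ : gvol G univ = 2 * edgeCount G := by
  have hpairs : #{p : V × V | G.Adj p.1 p.2} = gvol G univ := by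
    simpa using card_filter_adj_fst_mem G univ
  have hdeg : gvol G univ = 2 * #G.edgeFinset := by
    simp only [gvol, gdeg_eq_degree, SimpleGraph.sum_degrees_eq_twice_card_edges]
  rw [edgeCount, hpairs, hdeg]
  omega

theorem gcut_le_gvol (Z : Finset V) : gcut G Z ≤ gvol G Z := by
  rw [gcut, ← card_filter_adj_fst_mem]
  exact card_le_card fun p hp => by
    simp only [mem_filter, mem_univ, true_and] at hp ⊢
    exact ⟨hp.1, hp.2.2⟩

theorem gcut_le_gvol_of_adj_mem {Z N : Finset V}
    (hN : ∀ u v, u ∈ Z → v ∉ Z → G.Adj u v → v ∈ N) : gcut G Z ≤ gvol G N := by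
  rw [gcut, ← card_filter_adj_fst_mem]
  refine card_le_card_of_injOn Prod.swap (fun p hp => ?_) Prod.swap_injective.injOn
  simp only [coe_filter, mem_univ, true_and, Set.mem_ofPred_eq, Prod.fst_swap,
    Prod.snd_swap] at hp ⊢
  exact ⟨hN _ _ hp.1 hp.2.1 hp.2.2, hp.2.2.symm⟩

theorem gvol_le_half_or_of_disjoint {Z W : Finset V} (h : Disjoint Z W) :
    (gvol G Z : ℝ) ≤ gvol G univ / 2 ∨ (gvol G W : ℝ) ≤ gvol G univ / 2 := by
  have hsum : (gvol G Z : ℝ) + gvol G W ≤ gvol G univ := by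
    exact_mod_cast gvol_union_of_disjoint G h ▸ gvol_mono G (subset_univ _)
  by_contra! hlarge
  linarith [hlarge.1, hlarge.2]

end Volume

section Ball

variable (G : SimpleGraph V) (A : Finset V)

def walkBall (r : ℕ) : Finset V :=
  {v | ∃ a ∈ A, ∃ w : G.Walk a v, w.length ≤ r}

theorem subset_walkBall (r : ℕ) : A ⊆ walkBall G A r := fun a ha =>
  mem_filter.2 ⟨mem_univ _, a, ha, .nil, by simp⟩

theorem walkBall_mono {r r' : ℕ} (h : r ≤ r') : walkBall G A r ⊆ walkBall G A r' := by
  intro v hv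
  obtain ⟨-, a, ha, w, hw⟩ := mem_filter.1 hv
  exact mem_filter.2 ⟨mem_univ _, a, ha, w, hw.trans h⟩

theorem mem_walkBall_succ_of_adj {r : ℕ} {u v : V} (hu : u ∈ walkBall G A r)
    (h : G.Adj u v) : v ∈ walkBall G A (r + 1) := by
  obtain ⟨-, a, ha, w, hw⟩ := mem_filter.1 hu
  exact mem_filter.2 ⟨mem_univ _, a, ha, w.concat h, by simpa using hw⟩

theorem gvol_add_gcut_walkBall_le (r : ℕ) :
    gvol G (walkBall G A r) + gcut G (walkBall G A r) ≤ gvol G (walkBall G A (r + 1)) := by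
  have hcut : gcut G (walkBall G A r) ≤ gvol G (walkBall G A (r + 1) \ walkBall G A r) :=
    gcut_le_gvol_of_adj_mem G fun _ _ hu hv h =>
      mem_sdiff.2 ⟨mem_walkBall_succ_of_adj G A hu h, hv⟩
  have hsplit := gvol_union_of_disjoint G (disjoint_sdiff (s := walkBall G A r)
    (t := walkBall G A (r + 1)))
  rw [union_sdiff_of_subset (walkBall_mono G A (Nat.le_add_right r 1))] at hsplit
  omega

theorem disjoint_walkBall_of_lt_length (B : Finset V) {r r' : ℕ}
    (hfar : ∀ a ∈ A, ∀ b ∈ B, ∀ p : G.Walk a b, p.IsPath → r + r' < p.length) :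
    Disjoint (walkBall G A r) (walkBall G B r') := by
  refine disjoint_left.2 fun v hvA hvB => ?_
  obtain ⟨-, a, ha, wa, hwa⟩ := mem_filter.1 hvA
  obtain ⟨-, b, hb, wb, hwb⟩ := mem_filter.1 hvB
  have hlong := hfar a ha b hb _ (wa.append wb.reverse).bypass_isPath
  have hshort := (wa.append wb.reverse).length_bypass_le_length
  simp only [SimpleGraph.Walk.length_append, SimpleGraph.Walk.length_reverse] at hshort
  omega

theorem one_add_pow_mul_gvol_walkBall_le {α : ℝ} (hα : 0 ≤ α) (n : ℕ)
    (hdense : ∀ i < n, α * gvol G (walkBall G A i) ≤ gcut G (walkBall G A i)) :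
    (1 + α) ^ n * gvol G (walkBall G A 0) ≤ gvol G (walkBall G A n) := by
  induction n with
  | zero => simp
  | succ n ih =>
    have hstep : (gvol G (walkBall G A n) : ℝ) + gcut G (walkBall G A n) ≤
        gvol G (walkBall G A (n + 1)) := by
      exact_mod_cast gvol_add_gcut_walkBall_le G A n
    have ih' := ih fun i hi => hdense i (hi.trans n.lt_succ_self)
    have hn := hdense n n.lt_succ_self
    calc (1 + α) ^ (n + 1) * gvol G (walkBall G A 0)
        = (1 + α) * ((1 + α) ^ n * gvol G (walkBall G A 0)) := by ring
      _ ≤ (1 + α) * gvol G (walkBall G A n) := by gcongr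
      _ ≤ gvol G (walkBall G A (n + 1)) := by linarith

theorem exists_gcut_walkBall_le {α : ℝ} (hα : 0 ≤ α) (k : ℕ)
    (hgrowth : (gvol G univ : ℝ) < (1 + α) ^ (k + 1)) :
    ∃ i ≤ k, (gcut G (walkBall G A i) : ℝ) ≤ α * gvol G (walkBall G A i) := by
  by_contra! hdense
  have hcut0 : (gcut G (walkBall G A 0) : ℝ) ≤ gvol G (walkBall G A 0) := by
    exact_mod_cast gcut_le_gvol G _
  have hvol0 : (1 : ℝ) ≤ gvol G (walkBall G A 0) := by
    have := hdense 0 k.zero_le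
    have : (0 : ℝ) < gvol G (walkBall G A 0) := by nlinarith
    exact_mod_cast this
  have hgrow := one_add_pow_mul_gvol_walkBall_le G A hα (k + 1) fun i hi =>
    (hdense i (Nat.lt_succ_iff.1 hi)).le
  have hle : (gvol G (walkBall G A (k + 1)) : ℝ) ≤ gvol G univ := by
    exact_mod_cast gvol_mono G (subset_univ _)
  have hpow : (1 + α) ^ (k + 1) ≤ (1 + α) ^ (k + 1) * gvol G (walkBall G A 0) :=
    le_mul_of_one_le_right (by positivity) hvol0
  linarith

end Ball

theorem two_mul_lt_one_add_pow {m ℓ : ℝ} (hm : 2 ≤ m) (hℓ : 8 * Real.logb 2 m < ℓ) {k : ℕ}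
    (hk : ℓ / 2 < k + 1) : 2 * m < (1 + 8 * Real.logb 2 m / ℓ) ^ (k + 1) := by
  set α := 8 * Real.logb 2 m / ℓ
  have hlog : 0 < Real.logb 2 m := Real.logb_pos one_lt_two (by linarith)
  have hℓ0 : 0 < ℓ := by linarith
  have hα0 : 0 < α := by positivity
  have hα1 : α ≤ 1 := (div_le_one hℓ0).2 hℓ.le
  have hαℓ : α * (ℓ / 2) = 4 * Real.logb 2 m := by simp only [α]; field_simp; ring
  calc 2 * m < m ^ 4 := by nlinarith [pow_le_pow_left₀ zero_le_two hm 3]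
    _ = (2 : ℝ) ^ (α * (ℓ / 2)) := by
      rw [hαℓ, mul_comm, Real.rpow_mul zero_le_two, Real.rpow_logb two_pos (by norm_num)
        (by linarith)]
      norm_cast
    _ < (2 : ℝ) ^ (α * (k + 1)) :=
      (Real.rpow_lt_rpow_left_iff one_lt_two).2 (mul_lt_mul_of_pos_left hk hα0)
    _ = ((2 : ℝ) ^ α) ^ (k + 1) := by
      rw [Real.rpow_mul zero_le_two]
      norm_cast
    _ ≤ (1 + α) ^ (k + 1) := by
      gcongr
      simpa [one_add_one_eq_two] using rpow_one_add_le_one_add_mul_self (s := 1) (by norm_num) hα0.le hα1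

theorem exists_sparse_cut_superset (G : SimpleGraph V) (hm : 2 ≤ edgeCount G) {ℓ : ℝ}
    (hℓ : 0 < ℓ) (A : Finset V)
    (hA : (gvol G (walkBall G A ⌊ℓ / 2⌋₊) : ℝ) ≤ gvol G univ / 2) :
    ∃ Z : Finset V, (gvol G Z : ℝ) ≤ gvol G univ / 2 ∧
      (gcut G Z : ℝ) ≤ 8 * Real.logb 2 (edgeCount G) / ℓ * gvol G Z ∧ A ⊆ Z := by
  set α := 8 * Real.logb 2 (edgeCount G) / ℓ
  set k := ⌊ℓ / 2⌋₊
  have hα : 0 ≤ α := by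
    have : 0 ≤ Real.logb 2 (edgeCount G) :=
      Real.logb_nonneg one_lt_two (Nat.one_le_cast.2 (by omega))
    positivity
  have hsparse : ∃ i ≤ k, (gcut G (walkBall G A i) : ℝ) ≤ α * gvol G (walkBall G A i) := by
    rcases le_or_gt 1 α with hα1 | hα1
    · exact ⟨k, le_rfl, (Nat.cast_le.2 (gcut_le_gvol G _)).trans
        (le_mul_of_one_le_left (Nat.cast_nonneg _) hα1)⟩
    · refine exists_gcut_walkBall_le G A hα k ?_
      rw [gvol_univ, Nat.cast_mul, Nat.cast_two]
      exact two_mul_lt_one_add_pow (by exact_mod_cast hm) ((div_lt_one hℓ).1 hα1)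
        (Nat.lt_floor_add_one _)
  obtain ⟨i, hi, hcut⟩ := hsparse
  exact ⟨walkBall G A i, (Nat.cast_le.2 (gvol_mono G (walkBall_mono G A hi))).trans hA,
    hcut, subset_walkBall G A i⟩

theorem statement10_general (H : SimpleGraph V) (hm : 2 ≤ edgeCount H)
    (ℓ : ℝ) (hℓ : 1 ≤ ℓ) (S T : Finset V)
    (hfar : ∀ s ∈ S, ∀ t ∈ T, ∀ p : H.Walk s t, p.IsPath → ℓ < (p.length : ℝ)) :
    ∃ Z : Finset V,
      (gvol H Z : ℝ) ≤ (gvol H Finset.univ : ℝ) / 2 ∧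
      (gcut H Z : ℝ) ≤ 8 * Real.logb 2 (edgeCount H) / ℓ * (gvol H Z : ℝ) ∧
      (S ⊆ Z ∨ T ⊆ Z) := by
  have hℓ0 : 0 < ℓ := by linarith
  set k := ⌊ℓ / 2⌋₊
  have hk : 2 * (k : ℝ) ≤ ℓ := by linarith [Nat.floor_le (by positivity : 0 ≤ ℓ / 2)]
  have hdisj := disjoint_walkBall_of_lt_length H S T (r := k) (r' := k) fun s hs t ht p hp => by
    have := hfar s hs t ht p hp
    exact_mod_cast (by linarith : (k : ℝ) + k < p.length)
  rcases gvol_le_half_or_of_disjoint H hdisj with hS | hT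
  · obtain ⟨Z, hvol, hcut, hZ⟩ := exists_sparse_cut_superset H hm hℓ0 S hS
    exact ⟨Z, hvol, hcut, .inl hZ⟩
  · obtain ⟨Z, hvol, hcut, hZ⟩ := exists_sparse_cut_superset H hm hℓ0 T hT
    exact ⟨Z, hvol, hcut, .inr hZ⟩

/-- If `H` has `m ≥ 2` edges and `S`, `T` are nonempty vertex sets such that every
path in `H` from a vertex of `S` to a vertex of `T` has length greater than
`ℓ ≥ 1`, then there is a set `Z` with `vol_H(Z) ≤ vol(H)/2` and
`δ_H(Z) ≤ (8·log₂ m / ℓ)·vol_H(Z)`, containing `S` or containing `T`. -/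
theorem statement10 (H : SimpleGraph V) (hm : 2 ≤ edgeCount H)
    (ℓ : ℝ) (hℓ : 1 ≤ ℓ) (S T : Finset V) (hS : S.Nonempty) (hT : T.Nonempty)
    (hfar : ∀ s ∈ S, ∀ t ∈ T, ∀ p : H.Walk s t, p.IsPath → ℓ < (p.length : ℝ)) :
    ∃ Z : Finset V,
      (gvol H Z : ℝ) ≤ (gvol H Finset.univ : ℝ) / 2 ∧
      (gcut H Z : ℝ) ≤ 8 * Real.logb 2 (edgeCount H) / ℓ * (gvol H Z : ℝ) ∧
      (S ⊆ Z ∨ T ⊆ Z) :=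
  statement10_general H hm ℓ hℓ S T hfar
end
end
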